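/- arXiv:math/0603524 — 2 statements merged into one kernel-verified Lean document; each statement's English description precedes it below -/
import Mathlib

section
/- Define B♯ := B + ℏ⁻¹·{ b ∈ B : π(b) ∈ I } as a ℂ[ℏ]-submodule of B[ℏ⁻¹]. Then: (i) B♯ is a Lie subalgebra of B[ℏ⁻¹] with respect to the commutator bracket; (ii) there is a short exact sequence of ℂ-vector spaces 0 → B₀/I → B♯/ℏB♯ → I → 0, where B₀/I is the quotient of B₀ by the ℂ-subspace I, the first map is induced by the inclusion B ⊆ B♯, and the second map sends the class of ℏ⁻¹·b (with π(b) ∈ I) to π(b). -/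
/-! Closure of `B♯` under the commutator is the Poisson closure `{I, I} ⊆ I`: for
`x = b₁ + ℏ⁻¹b₁'` and `y = b₂ + ℏ⁻¹b₂'`, the cross terms `ℏ⁻¹[b₁, b₂']`, `ℏ⁻¹[b₁', b₂]`
lie in `B` because `I` is central in `B₀`, and `ℏ⁻²[b₁', b₂'] = ℏ⁻¹c` with `π c = {π b₁', π b₂'} ∈ I`.
For the exact sequence, multiplying by `ℏ` turns `b + ℏ⁻¹b'` into `ℏb + b' ∈ B`, so `b'` is
determined by the element modulo `ℏB`, and `π b'` is well defined. -/

section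

variable {B B₀ C : Type*} [Ring B] [Ring B₀] [Ring C]

/-- `B♯ = B + ℏ⁻¹·π⁻¹(I)` inside `C ⊇ B`, with `ι : B → C` the inclusion and `v` standing for
`ℏ⁻¹`. -/
def sharp (π : B →+* B₀) (ι : B →+* C) (v : C) (I : AddSubgroup B₀) : AddSubgroup C where
  carrier := {x | ∃ b b' : B, π b' ∈ I ∧ x = ι b + v * ι b'}
  zero_mem' := ⟨0, 0, by simp [I.zero_mem], by simp⟩
  add_mem' := by
    rintro _ _ ⟨b₁, b₁', h₁, rfl⟩ ⟨b₂, b₂', h₂, rfl⟩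
    refine ⟨b₁ + b₂, b₁' + b₂', by simpa using I.add_mem h₁ h₂, ?_⟩
    simp only [map_add, mul_add]
    abel
  neg_mem' := by
    rintro _ ⟨b, b', h, rfl⟩
    exact ⟨-b, -b', by simpa using I.neg_mem h, by rw [map_neg, map_neg, mul_neg, neg_add]⟩

theorem commutator_add_central_mul {v : C} (hv : ∀ c, v * c = c * v) (x x' y y' : C) :
    (x + v * x') * (y + v * y') - (y + v * y') * (x + v * x') =
      (x * y - y * x) + v * ((x * y' - y' * x) + (x' * y - y * x')) +
        v * (v * (x' * y' - y' * x')) := by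
  have hv' : ∀ a b, a * (v * b) = v * (a * b) := fun a b => by rw [← mul_assoc, ← hv, mul_assoc]
  simp only [mul_add, add_mul, mul_sub, mul_assoc]
  rw [hv' x, hv' x', hv' y, hv' y']
  abel

variable {π : B →+* B₀} {ι : B →+* C} {ℏ : B} {v : C} {I : AddSubgroup B₀}

theorem add_mem_sharp (b : B) {b' : B} (hb' : π b' ∈ I) : ι b + v * ι b' ∈ sharp π ι v I :=
  ⟨b, b', hb', rfl⟩

theorem mul_map_hbar_mul (hv : v * ι ℏ = 1) (b : B) : v * ι (ℏ * b) = ι b := by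
  rw [map_mul, ← mul_assoc, hv, one_mul]

theorem map_hbar_mul_add (hv : ι ℏ * v = 1) (b b' : B) :
    ι ℏ * (ι b + v * ι b') = ι (ℏ * b + b') := by
  rw [mul_add, ← mul_assoc, hv, one_mul, map_add, map_mul]

theorem map_eq_of_add_mul_eq (hπℏ : π ℏ = 0) (hι : Function.Injective ι) (hv : ι ℏ * v = 1)
    {b₁ b₁' b₂ b₂' : B} (h : ι b₁ + v * ι b₁' = ι b₂ + v * ι b₂') : π b₁' = π b₂' := by
  have h' : ι (ℏ * b₁ + b₁') = ι (ℏ * b₂ + b₂') := by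
    rw [← map_hbar_mul_add hv, h, map_hbar_mul_add hv]
  simpa [hπℏ] using congrArg π (hι h')

theorem exists_mem_sharp_map_eq_iff (hπℏ : π ℏ = 0) (hι : Function.Injective ι)
    (hv₁ : ι ℏ * v = 1) (b : B) :
    (∃ s ∈ sharp π ι v I, ι b = ι ℏ * s) ↔ π b ∈ I := by
  constructor
  · rintro ⟨_, ⟨c, c', hc', rfl⟩, h⟩
    rw [map_hbar_mul_add hv₁] at h
    simpa [hι h, hπℏ] using hc'
  · intro hb
    refine ⟨v * ι b, by simpa using add_mem_sharp (ι := ι) (v := v) (0 : B) hb, ?_⟩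
    rw [← mul_assoc, hv₁, one_mul]

theorem map_eq_zero_iff_exists_mem_sharp (hker : ∀ b, π b = 0 ↔ ∃ a, b = ℏ * a)
    (hι : Function.Injective ι) (hv₁ : ι ℏ * v = 1) (hv₂ : v * ι ℏ = 1) (b b' : B) :
    π b' = 0 ↔ ∃ (a : B) (s : C), s ∈ sharp π ι v I ∧ ι b + v * ι b' = ι a + ι ℏ * s := by
  have hπℏ : π ℏ = 0 := (hker ℏ).mpr ⟨1, (mul_one ℏ).symm⟩
  constructor
  · intro h
    obtain ⟨c, rfl⟩ := (hker b').mp h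
    refine ⟨b + c, 0, zero_mem _, ?_⟩
    rw [mul_map_hbar_mul hv₂, mul_zero, add_zero, map_add]
  · rintro ⟨a, _, ⟨c, c', -, rfl⟩, h⟩
    have h' : ι b + v * ι b' = ι (a + (ℏ * c + c')) + v * ι 0 := by
      rw [h, map_hbar_mul_add hv₁, map_zero, mul_zero, add_zero, map_add ι a]
    simpa using map_eq_of_add_mul_eq hπℏ hι hv₁ h'

theorem exists_commutator_eq_hbar_mul (hker : ∀ b, π b = 0 → ∃ a, b = ℏ * a) (a : B) {b : B}
    (hb : π b ∈ Subring.center B₀) : ∃ c, a * b - b * a = ℏ * c :=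
  hker _ (by rw [map_sub, map_mul, map_mul, Subring.mem_center_iff.mp hb, sub_self])

theorem commutator_mem_sharp (hker : ∀ b, π b = 0 → ∃ a, b = ℏ * a)
    (hv : v * ι ℏ = 1) (hvcentral : ∀ c, v * c = c * v)
    (hIcenter : ∀ x ∈ I, x ∈ Subring.center B₀)
    (hIbracket : ∀ i j c : B, π i ∈ I → π j ∈ I → i * j - j * i = ℏ * c → π c ∈ I)
    {x y : C} (hx : x ∈ sharp π ι v I) (hy : y ∈ sharp π ι v I) :
    x * y - y * x ∈ sharp π ι v I := by
  obtain ⟨b₁, b₁', h₁, rfl⟩ := hx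
  obtain ⟨b₂, b₂', h₂, rfl⟩ := hy
  obtain ⟨c₁, hc₁⟩ := exists_commutator_eq_hbar_mul hker b₁ (hIcenter _ h₂)
  obtain ⟨c₂, hc₂⟩ := exists_commutator_eq_hbar_mul hker b₂ (hIcenter _ h₁)
  obtain ⟨c₃, hc₃⟩ := exists_commutator_eq_hbar_mul hker b₁' (hIcenter _ h₂)
  refine ⟨b₁ * b₂ - b₂ * b₁ + c₁ - c₂, c₃, hIbracket _ _ _ h₁ h₂ hc₃, ?_⟩
  have hι : ∀ {a c : B}, a = ℏ * c → ι c = v * ι a := fun h => by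
    rw [h, mul_map_hbar_mul hv]
  rw [commutator_add_central_mul hvcentral, map_sub, map_add, hι hc₁, hι hc₂, hι hc₃]
  simp only [map_sub, map_mul]
  noncomm_ring

theorem smul_mem_sharp {R : Type*} [CommSemiring R] [Algebra R B] [Algebra R B₀] [Algebra R C]
    (hπ : ∀ a : R, π (algebraMap R B a) = algebraMap R B₀ a)
    (hι : ∀ a : R, ι (algebraMap R B a) = algebraMap R C a)
    (hI : ∀ (a : R), ∀ x ∈ I, a • x ∈ I) (a : R) {x : C} (hx : x ∈ sharp π ι v I) :
    a • x ∈ sharp π ι v I := by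
  obtain ⟨b, b', hb', rfl⟩ := hx
  refine ⟨a • b, a • b', ?_, ?_⟩
  · rw [Algebra.smul_def, map_mul, hπ, ← Algebra.smul_def]
    exact hI a _ hb'
  · have hιsmul : ∀ c : B, ι (a • c) = a • ι c := fun c => by
      rw [Algebra.smul_def, map_mul, hι, ← Algebra.smul_def]
    rw [hιsmul, hιsmul, smul_add, mul_smul_comm]

end

theorem stmt_4_general (B : Type*) [Ring B] [Algebra ℂ B]
    (hbar : B)
    (B₀ : Type*) [Ring B₀] [Algebra ℂ B₀] (π : B →+* B₀)
    (hπℂ : ∀ a : ℂ, π (algebraMap ℂ B a) = algebraMap ℂ B₀ a)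
    (hsurj : Function.Surjective π)
    (hker : ∀ b : B, π b = 0 ↔ ∃ a : B, b = hbar * a)
    (A I : Set B₀)
    (hAcenter : A ⊆ Subring.center B₀)
    (h1A : (1 : B₀) ∈ A)
    (hAsmul : ∀ (a : ℂ), ∀ x ∈ A, a • x ∈ A)
    (hIA : I ⊆ A)
    (h0I : (0 : B₀) ∈ I)
    (hIadd : ∀ x ∈ I, ∀ y ∈ I, x + y ∈ I)
    (hIneg : ∀ x ∈ I, -x ∈ I)
    (hImul : ∀ a ∈ A, ∀ x ∈ I, a * x ∈ I)
    (hAI : ∀ a i c : B, π a ∈ A → π i ∈ I →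
      a * i - i * a = hbar * c → π c ∈ I)
    (C : Type*) [Ring C] [Algebra ℂ C] (ι : B →+* C)
    (hιℂ : ∀ a : ℂ, ι (algebraMap ℂ B a) = algebraMap ℂ C a)
    (hιinj : Function.Injective ι)
    (v : C) (hv₁ : ι hbar * v = 1) (hv₂ : v * ι hbar = 1)
    (hvcentral : ∀ c : C, v * c = c * v)
    (S : Set C)
    (hS : S = {x : C | ∃ b b' : B, π b' ∈ I ∧ x = ι b + v * ι b'}) :
    -- (i) `B♯` is a Lie subalgebra of `B[ℏ⁻¹]` under the commutator
    (((0 : C) ∈ S) ∧ (∀ x ∈ S, ∀ y ∈ S, x + y ∈ S) ∧ (∀ x ∈ S, -x ∈ S) ∧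
      (∀ (a : ℂ), ∀ x ∈ S, a • x ∈ S) ∧
      (∀ x ∈ S, ∀ y ∈ S, x * y - y * x ∈ S)) ∧
    -- (ii) the short exact sequence `0 → B₀/I → B♯/ℏB♯ → I → 0`
    ((∀ b₁ b₁' b₂ b₂' : B, π b₁' ∈ I → π b₂' ∈ I →
        ι b₁ + v * ι b₁' = ι b₂ + v * ι b₂' → π b₁' = π b₂') ∧
      (∀ b : B, (∃ s ∈ S, ι b = ι hbar * s) ↔ π b ∈ I) ∧
      (∀ b b' : B, π b' ∈ I →
        (π b' = 0 ↔ ∃ (a : B) (s : C), s ∈ S ∧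
          ι b + v * ι b' = ι a + ι hbar * s)) ∧
      (∀ i ∈ I, ∃ b' : B, π b' ∈ I ∧ π b' = i)) := by
  let J : AddSubgroup B₀ :=
    { carrier := I, zero_mem' := h0I, add_mem' := fun hx hy => hIadd _ hx _ hy,
      neg_mem' := fun hx => hIneg _ hx }
  obtain rfl : S = sharp π ι v J := hS
  have hπℏ : π hbar = 0 := (hker hbar).mpr ⟨1, (mul_one hbar).symm⟩
  have hJsmul : ∀ (a : ℂ), ∀ x ∈ J, a • x ∈ J := fun a x hx => by
    rw [Algebra.smul_def]
    exact hImul _ (by simpa [Algebra.smul_def] using hAsmul a 1 h1A) x hx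
  have hJbracket : ∀ i j c : B, π i ∈ J → π j ∈ J → i * j - j * i = hbar * c → π c ∈ J :=
    fun i j c hi => hAI i j c (hIA hi)
  refine ⟨⟨zero_mem _, fun _ hx _ hy => add_mem hx hy, fun _ hx => neg_mem hx,
      fun a _ hx => smul_mem_sharp hπℂ hιℂ hJsmul a hx,
      fun _ hx _ hy => commutator_mem_sharp (fun b => (hker b).mp) hv₂ hvcentral
        (fun x hx => hAcenter (hIA hx)) hJbracket hx hy⟩,
    fun _ _ _ _ _ _ h => map_eq_of_add_mul_eq hπℏ hιinj hv₁ h,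
    exists_mem_sharp_map_eq_iff hπℏ hιinj hv₁,
    fun b b' _ => map_eq_zero_iff_exists_mem_sharp hker hιinj hv₁ hv₂ b b',
    fun i hi => by obtain ⟨b', rfl⟩ := hsurj i; exact ⟨b', hi, rfl⟩⟩

/-- the subspace `B♯ := B + ℏ⁻¹·{b ∈ B : π b ∈ I}` of `B[ℏ⁻¹]`.
Here `C` plays the role of `B[ℏ⁻¹]` (with `v = ℏ⁻¹` a central inverse of `ι ℏ`,
and `C` generated by `ι(B)` and `v`), `A ⊆ Z(B₀)` is a `ℂ`-subalgebra closed
under the Poisson bracket, and `I ⊆ A` is an ideal with `{A, I} ⊆ I`.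
(i) `S = B♯` is a Lie subalgebra of `C` for the commutator bracket;
(ii) the short exact sequence `0 → B₀/I → B♯/ℏB♯ → I → 0`, stated elementwise:
the assignment `ι b + v·ι b' ↦ π b'` is well defined, the map `B₀/I → B♯/ℏB♯`
induced by the inclusion `B ⊆ B♯` is injective, the sequence is exact in the
middle, and the second map is surjective onto `I`. -/
theorem stmt_4 (B : Type*) [Ring B] [Algebra ℂ B] [Algebra (Polynomial ℂ) B]
    [IsScalarTower ℂ (Polynomial ℂ) B]
    (htf : ∀ (q : Polynomial ℂ) (b : B), q • b = 0 → q = 0 ∨ b = 0)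
    (hbar : B) (hhbar : hbar = algebraMap (Polynomial ℂ) B Polynomial.X)
    (B₀ : Type*) [Ring B₀] [Algebra ℂ B₀] (π : B →+* B₀)
    (hπℂ : ∀ a : ℂ, π (algebraMap ℂ B a) = algebraMap ℂ B₀ a)
    (hsurj : Function.Surjective π)
    (hker : ∀ b : B, π b = 0 ↔ ∃ a : B, b = hbar * a)
    (A I : Set B₀)
    (hAcenter : A ⊆ Subring.center B₀)
    (h1A : (1 : B₀) ∈ A)
    (hAadd : ∀ x ∈ A, ∀ y ∈ A, x + y ∈ A)
    (hAmul : ∀ x ∈ A, ∀ y ∈ A, x * y ∈ A)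
    (hAsmul : ∀ (a : ℂ), ∀ x ∈ A, a • x ∈ A)
    (hAA : ∀ a₁ a₂ c : B, π a₁ ∈ A → π a₂ ∈ A →
      a₁ * a₂ - a₂ * a₁ = hbar * c → π c ∈ A)
    (hIA : I ⊆ A)
    (h0I : (0 : B₀) ∈ I)
    (hIadd : ∀ x ∈ I, ∀ y ∈ I, x + y ∈ I)
    (hIneg : ∀ x ∈ I, -x ∈ I)
    (hImul : ∀ a ∈ A, ∀ x ∈ I, a * x ∈ I)
    (hAI : ∀ a i c : B, π a ∈ A → π i ∈ I →
      a * i - i * a = hbar * c → π c ∈ I)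
    (C : Type*) [Ring C] [Algebra ℂ C] (ι : B →+* C)
    (hιℂ : ∀ a : ℂ, ι (algebraMap ℂ B a) = algebraMap ℂ C a)
    (hιinj : Function.Injective ι)
    (v : C) (hv₁ : ι hbar * v = 1) (hv₂ : v * ι hbar = 1)
    (hvcentral : ∀ c : C, v * c = c * v)
    (hCgen : ∀ c : C, ∃ (b : B) (k : ℕ), c = v ^ k * ι b)
    (S : Set C)
    (hS : S = {x : C | ∃ b b' : B, π b' ∈ I ∧ x = ι b + v * ι b'}) :
    -- (i) `B♯` is a Lie subalgebra of `B[ℏ⁻¹]` under the commutator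
    (((0 : C) ∈ S) ∧ (∀ x ∈ S, ∀ y ∈ S, x + y ∈ S) ∧ (∀ x ∈ S, -x ∈ S) ∧
      (∀ (a : ℂ), ∀ x ∈ S, a • x ∈ S) ∧
      (∀ x ∈ S, ∀ y ∈ S, x * y - y * x ∈ S)) ∧
    -- (ii) the short exact sequence `0 → B₀/I → B♯/ℏB♯ → I → 0`
    ((∀ b₁ b₁' b₂ b₂' : B, π b₁' ∈ I → π b₂' ∈ I →
        ι b₁ + v * ι b₁' = ι b₂ + v * ι b₂' → π b₁' = π b₂') ∧
      (∀ b : B, (∃ s ∈ S, ι b = ι hbar * s) ↔ π b ∈ I) ∧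
      (∀ b b' : B, π b' ∈ I →
        (π b' = 0 ↔ ∃ (a : B) (s : C), s ∈ S ∧
          ι b + v * ι b' = ι a + ι hbar * s)) ∧
      (∀ i ∈ I, ∃ b' : B, π b' ∈ I ∧ π b' = i)) :=
  stmt_4_general B hbar B₀ π hπℂ hsurj hker A I hAcenter h1A hAsmul hIA h0I hIadd hIneg hImul hAI C
    ι hιℂ hιinj v hv₁ hv₂ hvcentral S hS
end

section
/- For every B-module N on which ℏ acts injectively and which satisfies I·(N/ℏN) = 0, composition with the inclusion M ↪ M^{ren} induces a bijection Hom_B(M^{ren}, N) ≅ Hom_B(M, N). Consequently, the inclusion of the full subcategory of ℏ-torsion-free B-modules N with I·(N/ℏN) = 0 into the category of ℏ-torsion-free B-modules admits a left adjoint, given on objects by M ↦ M^{ren}. -/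
/-!
Write `ℏ⁻¹` for `v`. `M^{ren}` is the smallest additive subgroup of `M[ℏ⁻¹]` containing `M` and
stable under `t ↦ ℏ⁻¹ • b • t` for `π b ∈ I`, so both halves of the universal property
follow by checking that a suitable subgroup has these two properties. For uniqueness it is the
equalizer of the two maps: if they agree at `b • t` then they agree at `ℏ⁻¹ • b • t`, because `N`
has no `ℏ`-torsion. For existence it is the set of `x = ℏ⁻ᵏ • m` at which `ℏ⁻ᵏ • g m` already lies
in `N`: this is a subgroup, and since `I • N ⊆ ℏ • N`, with `t` it contains `ℏ⁻¹ • b • t`.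
The extension is `x ↦ ℏ⁻ᵏ • g m`, which is well defined because `N` has no `ℏ`-torsion.
-/

open Pointwise

/-- For a subset `T ⊆ M'` (representing a `B`-submodule `N` of `M[ℏ⁻¹]`), the
subset representing `{n ∈ N : n̄ ∈ I·(N/ℏN)}`, namely the additive group
generated by `Ĩ·T` and `ℏ·T` (where `Ĩ = π⁻¹(I)` and `ℏ = hb`). -/
def sharpAux {B B₀ C M' : Type*} [Ring B] [Ring B₀] [Ring C]
    [AddCommGroup M'] [Module C M']
    (π : B →+* B₀) (I : Set B₀) (ι : B →+* C) (hb : B) (T : Set M') : Set M' :=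
  (AddSubgroup.closure
    ({x : M' | ∃ b : B, π b ∈ I ∧ ∃ t ∈ T, x = ι b • t} ∪ (ι hb) • T) :
    AddSubgroup M')

/-- The basic modification step `T ↦ T♯ = T + ℏ⁻¹·{t ∈ T : t̄ ∈ I·T₀}` inside
`M[ℏ⁻¹]`, at the level of subsets of `M'` (here `v = ℏ⁻¹`, `hb = ℏ`). -/
def sharpSet {B B₀ C M' : Type*} [Ring B] [Ring B₀] [Ring C]
    [AddCommGroup M'] [Module C M']
    (π : B →+* B₀) (I : Set B₀) (ι : B →+* C) (hb : B) (v : C)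
    (T : Set M') : Set M' :=
  (AddSubgroup.closure (T ∪ v • sharpAux π I ι hb T) : AddSubgroup M')

theorem pow_add_mul_pow_of_mul_eq_one {R : Type*} [Monoid R] {a b : R} (hab : a * b = 1)
    (hba : b * a = 1) (j k : ℕ) : a ^ (j + k) * b ^ k = a ^ j := by
  rw [pow_add, mul_assoc, ← (show Commute a b from hab.trans hba.symm).mul_pow, hab, one_pow,
    mul_one]

theorem Commute.of_mul_eq_one_left {R : Type*} [Monoid R] {a b c : R} (hac : Commute a c)
    (hab : a * b = 1) (hba : b * a = 1) : Commute b c :=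
  Commute.units_inv_left (u := ⟨a, b, hab, hba⟩) hac

section Renorm

variable {B B₀ C M' : Type*} [Ring B] [Ring B₀] [Ring C] [AddCommGroup M'] [Module C M']
  (π : B →+* B₀) (I : Set B₀) (ι : B →+* C) (hb : B) (v : C)

def renorm (T : AddSubgroup M') : AddSubgroup M' :=
  ⨆ k, AddSubgroup.closure ((sharpSet π I ι hb v)^[k] (T : Set M'))

variable {π I ι hb v}

theorem subset_sharpSet (X : Set M') : X ⊆ sharpSet π I ι hb v X :=
  fun _ hx => AddSubgroup.subset_closure (Or.inl hx)

theorem coe_closure_iterate_sharpSet (T : AddSubgroup M') (k : ℕ) :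
    (AddSubgroup.closure ((sharpSet π I ι hb v)^[k] (T : Set M')) : Set M') =
      (sharpSet π I ι hb v)^[k] (T : Set M') := by
  cases k with
  | zero => simp
  | succ k => rw [Function.iterate_succ_apply', sharpSet, AddSubgroup.closure_eq]

theorem monotone_closure_iterate_sharpSet (T : AddSubgroup M') :
    Monotone fun k => AddSubgroup.closure ((sharpSet π I ι hb v)^[k] (T : Set M')) :=
  monotone_nat_of_le_succ fun k => AddSubgroup.closure_mono <| by
    rw [Function.iterate_succ_apply']
    exact subset_sharpSet _

theorem coe_renorm (T : AddSubgroup M') :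
    (renorm π I ι hb v T : Set M') = ⋃ k, (sharpSet π I ι hb v)^[k] (T : Set M') := by
  rw [renorm, AddSubgroup.coe_iSup_of_directed (monotone_closure_iterate_sharpSet T).directed_le]
  simp_rw [coe_closure_iterate_sharpSet]

theorem le_renorm (T : AddSubgroup M') : T ≤ renorm π I ι hb v T := fun x hx => by
  rw [← SetLike.mem_coe, coe_renorm]
  exact Set.mem_iUnion.2 ⟨0, hx⟩

theorem sharpSet_subset {X : Set M'} {S : AddSubgroup M'} (hXS : X ⊆ S)
    (hS : ∀ b, π b ∈ I → ∀ t ∈ S, v • ι b • t ∈ S) (hv₂ : v * ι hb = 1) :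
    sharpSet π I ι hb v X ⊆ S := by
  have haux : sharpAux π I ι hb X ⊆ S.comap (DistribSMul.toAddMonoidHom M' v) :=
    (AddSubgroup.closure_le _).2 <| Set.union_subset
      (by rintro _ ⟨b, hb', t, ht, rfl⟩; exact hS b hb' t (hXS ht))
      (by rintro _ ⟨t, ht, rfl⟩; simpa [smul_smul, hv₂] using hXS ht)
  exact (AddSubgroup.closure_le S).2 <|
    Set.union_subset hXS (Set.smul_set_subset_iff.2 fun _ hy => haux hy)

theorem renorm_le {T S : AddSubgroup M'} (hTS : T ≤ S)
    (hS : ∀ b, π b ∈ I → ∀ t ∈ S, v • ι b • t ∈ S) (hv₂ : v * ι hb = 1) :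
    renorm π I ι hb v T ≤ S := by
  refine iSup_le fun k => (AddSubgroup.closure_le S).2 ?_
  induction k with
  | zero => exact hTS
  | succ k ih =>
    rw [Function.iterate_succ_apply']
    exact sharpSet_subset ih hS hv₂

theorem v_smul_smul_mem_renorm {T : AddSubgroup M'} {b : B} (hb' : π b ∈ I) {x : M'}
    (hx : x ∈ renorm π I ι hb v T) : v • ι b • x ∈ renorm π I ι hb v T := by
  rw [← SetLike.mem_coe, coe_renorm, Set.mem_iUnion] at hx ⊢
  obtain ⟨k, hk⟩ := hx
  refine ⟨k + 1, ?_⟩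
  rw [Function.iterate_succ_apply']
  exact AddSubgroup.subset_closure <| Or.inr <| Set.smul_mem_smul_set <|
    AddSubgroup.subset_closure (Or.inl ⟨b, hb', x, hk, rfl⟩)

theorem eqOn_renorm {N : Type*} [AddCommGroup N] [Module B N] (hv₁ : ι hb * v = 1)
    (hv₂ : v * ι hb = 1) (hN : IsSMulRegular N hb) {T : AddSubgroup M'} {f₁ f₂ : M' → N}
    (hadd₁ : ∀ x ∈ renorm π I ι hb v T, ∀ y ∈ renorm π I ι hb v T, f₁ (x + y) = f₁ x + f₁ y)
    (hsmul₁ : ∀ b : B, ∀ x ∈ renorm π I ι hb v T, f₁ (ι b • x) = b • f₁ x)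
    (hadd₂ : ∀ x ∈ renorm π I ι hb v T, ∀ y ∈ renorm π I ι hb v T, f₂ (x + y) = f₂ x + f₂ y)
    (hsmul₂ : ∀ b : B, ∀ x ∈ renorm π I ι hb v T, f₂ (ι b • x) = b • f₂ x)
    (hT : ∀ x ∈ T, f₁ x = f₂ x) :
    Set.EqOn f₁ f₂ (renorm π I ι hb v T) := by
  set R := renorm π I ι hb v T
  let φ₁ : R →+ N := AddMonoidHom.mk' (fun x => f₁ x) fun x y => hadd₁ x x.2 y y.2
  let φ₂ : R →+ N := AddMonoidHom.mk' (fun x => f₂ x) fun x y => hadd₂ x x.2 y y.2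
  have hsharp : ∀ b, π b ∈ I → ∀ t ∈ (φ₁.eqLocus φ₂).map R.subtype,
      v • ι b • t ∈ (φ₁.eqLocus φ₂).map R.subtype := by
    rintro b hb' _ ⟨x, hx, rfl⟩
    have hvx : v • ι b • (x : M') ∈ R := v_smul_smul_mem_renorm hb' x.2
    have hb_smul : ∀ f : M' → N, (∀ b : B, ∀ x ∈ R, f (ι b • x) = b • f x) →
        hb • f (v • ι b • x) = b • f x := fun f hf => by
      rw [← hf hb _ hvx, smul_smul, hv₁, one_smul, hf b _ x.2]
    refine ⟨⟨_, hvx⟩, hN ?_, rfl⟩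
    change hb • f₁ _ = hb • f₂ _
    rw [hb_smul f₁ hsmul₁, hb_smul f₂ hsmul₂]
    exact congrArg (b • ·) hx
  intro x hx
  obtain ⟨y, hy, rfl⟩ := renorm_le (S := (φ₁.eqLocus φ₂).map R.subtype)
    (fun t ht => ⟨⟨t, le_renorm T ht⟩, hT t ht, rfl⟩) hsharp hv₂ hx
  exact hy

end Renorm

section Extension

variable {B B₀ C M M' N : Type*} [Ring B] [Ring B₀] [Ring C] [AddCommGroup M] [Module B M]
  [AddCommGroup M'] [Module C M'] [AddCommGroup N] [Module B N]
  {π : B →+* B₀} {I : Set B₀} {ι : B →+* C} {hb : B} {v : C}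

/-- `n = ℏ⁻ᵏ • g m` at `x = ℏ⁻ᵏ • m`, i.e. `(x, n)` lies on the graph of `g[ℏ⁻¹]`. -/
def InLocalizedGraph (ιM : M →+ M') (v : C) (hb : B) (g : M →ₗ[B] N) (x : M') (n : N) : Prop :=
  ∃ (m : M) (k : ℕ), x = v ^ k • ιM m ∧ hb ^ k • n = g m

theorem inLocalizedGraph_apply (ιM : M →+ M') (g : M →ₗ[B] N) (m : M) :
    InLocalizedGraph ιM v hb g (ιM m) (g m) :=
  ⟨m, 0, by simp, by simp⟩

theorem v_pow_add_smul_pow_smul {ιM : M →+ M'} (hv₁ : ι hb * v = 1) (hv₂ : v * ι hb = 1)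
    (hιMact : ∀ (b : B) (m : M), ιM (b • m) = ι b • ιM m) (k j : ℕ) (m : M) :
    v ^ (k + j) • ιM (hb ^ j • m) = v ^ k • ιM m := by
  rw [hιMact, map_pow, smul_smul, pow_add_mul_pow_of_mul_eq_one hv₂ hv₁]

namespace InLocalizedGraph

variable {ιM : M →+ M'} {g : M →ₗ[B] N} {x y : M'} {n n' : N}

theorem unique (hv₁ : ι hb * v = 1) (hv₂ : v * ι hb = 1) (hιM : Function.Injective ιM)
    (hιMact : ∀ (b : B) (m : M), ιM (b • m) = ι b • ιM m) (hN : IsSMulRegular N hb)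
    (h : InLocalizedGraph ιM v hb g x n) (h' : InLocalizedGraph ιM v hb g x n') : n = n' := by
  obtain ⟨m, k, rfl, hk⟩ := h
  obtain ⟨m', j, hx, hj⟩ := h'
  have hm : hb ^ j • m = hb ^ k • m' := hιM <| by
    rw [hιMact, hιMact, map_pow, map_pow, ← pow_add_mul_pow_of_mul_eq_one hv₁ hv₂ j k, mul_smul,
      hx, ← mul_smul, add_comm j k, pow_add_mul_pow_of_mul_eq_one hv₁ hv₂ k j]
  refine hN.pow (j + k) ?_
  change hb ^ (j + k) • n = hb ^ (j + k) • n'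
  rw [pow_add, mul_smul, hk, ← map_smul, hm, map_smul, ← hj, smul_smul, ← pow_add, add_comm k j,
    pow_add]

theorem add (hv₁ : ι hb * v = 1) (hv₂ : v * ι hb = 1)
    (hιMact : ∀ (b : B) (m : M), ιM (b • m) = ι b • ιM m)
    (h : InLocalizedGraph ιM v hb g x n) (h' : InLocalizedGraph ιM v hb g y n') :
    InLocalizedGraph ιM v hb g (x + y) (n + n') := by
  obtain ⟨m, k, rfl, hk⟩ := h
  obtain ⟨m', j, rfl, hj⟩ := h'
  refine ⟨hb ^ j • m + hb ^ k • m', k + j, ?_, ?_⟩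
  · rw [map_add, smul_add, v_pow_add_smul_pow_smul hv₁ hv₂ hιMact, add_comm k j,
      v_pow_add_smul_pow_smul hv₁ hv₂ hιMact]
  · rw [map_add, map_smul, map_smul, ← hk, ← hj, smul_add, smul_smul, smul_smul, ← pow_add,
      ← pow_add, add_comm j k]

theorem neg (h : InLocalizedGraph ιM v hb g x n) : InLocalizedGraph ιM v hb g (-x) (-n) := by
  obtain ⟨m, k, rfl, hk⟩ := h
  exact ⟨-m, k, by rw [map_neg, smul_neg], by rw [map_neg, smul_neg, hk]⟩

theorem smul (hhb : ∀ b : B, Commute hb b) (hvι : ∀ b : B, Commute v (ι b))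
    (hιMact : ∀ (b : B) (m : M), ιM (b • m) = ι b • ιM m)
    (h : InLocalizedGraph ιM v hb g x n) (b : B) :
    InLocalizedGraph ιM v hb g (ι b • x) (b • n) := by
  obtain ⟨m, k, rfl, hk⟩ := h
  refine ⟨b • m, k, ?_, ?_⟩
  · rw [hιMact, smul_smul, smul_smul, ((hvι b).pow_left k).eq]
  · rw [map_smul, ← hk, smul_smul, smul_smul, ((hhb b).pow_left k).eq]

theorem exists_v_smul_smul (hhb : ∀ b : B, Commute hb b) (hvι : ∀ b : B, Commute v (ι b))
    (hιMact : ∀ (b : B) (m : M), ιM (b • m) = ι b • ιM m)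
    (hIN : ∀ (b : B) (n : N), π b ∈ I → ∃ n' : N, b • n = hb • n')
    (h : InLocalizedGraph ιM v hb g x n) {b : B} (hb' : π b ∈ I) :
    ∃ n', InLocalizedGraph ιM v hb g (v • ι b • x) n' := by
  obtain ⟨n', hn'⟩ := hIN b n hb'
  refine ⟨n', ?_⟩
  obtain ⟨m, k, hx, hk⟩ := h.smul hhb hvι hιMact b
  refine ⟨m, k + 1, by rw [hx, pow_succ', mul_smul], ?_⟩
  rw [pow_succ, mul_smul, ← hn', hk]

end InLocalizedGraph

theorem exists_extension {ιM : M →+ M'} (hv₁ : ι hb * v = 1) (hv₂ : v * ι hb = 1)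
    (hhb : ∀ b : B, Commute hb b) (hvι : ∀ b : B, Commute v (ι b)) (hιM : Function.Injective ιM)
    (hιMact : ∀ (b : B) (m : M), ιM (b • m) = ι b • ιM m) (hN : IsSMulRegular N hb)
    (hIN : ∀ (b : B) (n : N), π b ∈ I → ∃ n' : N, b • n = hb • n') (g : M →ₗ[B] N) :
    ∃ f : M' → N,
      (∀ x ∈ renorm π I ι hb v ιM.range, ∀ y ∈ renorm π I ι hb v ιM.range,
        f (x + y) = f x + f y) ∧
      (∀ b : B, ∀ x ∈ renorm π I ι hb v ιM.range, f (ι b • x) = b • f x) ∧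
      ∀ m : M, f (ιM m) = g m := by
  let D : AddSubgroup M' :=
    { carrier := {x | ∃ n, InLocalizedGraph ιM v hb g x n}
      add_mem' := fun ⟨n, h⟩ ⟨n', h'⟩ => ⟨n + n', h.add hv₁ hv₂ hιMact h'⟩
      zero_mem' := ⟨0, by simpa using inLocalizedGraph_apply (v := v) (hb := hb) ιM g 0⟩
      neg_mem' := fun ⟨n, h⟩ => ⟨-n, h.neg⟩ }
  have hD : renorm π I ι hb v ιM.range ≤ D :=
    renorm_le (by rintro _ ⟨m, rfl⟩; exact ⟨g m, inLocalizedGraph_apply ιM g m⟩)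
      (fun _ hb' _ ⟨_, h⟩ => h.exists_v_smul_smul hhb hvι hιMact hIN hb') hv₂
  have hf : ∀ {x n}, InLocalizedGraph ιM v hb g x n →
      Classical.epsilon (InLocalizedGraph ιM v hb g x) = n := fun h =>
    (Classical.epsilon_spec ⟨_, h⟩).unique hv₁ hv₂ hιM hιMact hN h
  refine ⟨fun x => Classical.epsilon (InLocalizedGraph ιM v hb g x), fun x hx y hy => ?_,
    fun b x hx => ?_, fun m => hf (inLocalizedGraph_apply ιM g m)⟩
  · obtain ⟨n, h⟩ := hD hx
    obtain ⟨n', h'⟩ := hD hy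
    dsimp only
    rw [hf h, hf h', hf (h.add hv₁ hv₂ hιMact h')]
  · obtain ⟨n, h⟩ := hD hx
    dsimp only
    rw [hf h, hf (h.smul hhb hvι hιMact b)]

end Extension

theorem stmt_8_general (B : Type*) [Ring B] [Algebra (Polynomial ℂ) B]
    (hbar : B) (hhbar : hbar = algebraMap (Polynomial ℂ) B Polynomial.X)
    (B₀ : Type*) [Ring B₀] (π : B →+* B₀)
    (I : Set B₀)
    (C : Type*) [Ring C] (ι : B →+* C)
    (v : C) (hv₁ : ι hbar * v = 1) (hv₂ : v * ι hbar = 1)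
    (M : Type*) [AddCommGroup M] [Module B M]
    (M' : Type*) [AddCommGroup M'] [Module C M']
    (ιM : M →+ M') (hιMinj : Function.Injective ιM)
    (hιMact : ∀ (b : B) (m : M), ιM (b • m) = ι b • ιM m)
    (Mren : Set M')
    (hMren : Mren = ⋃ k : ℕ, (sharpSet π I ι hbar v)^[k] (Set.range ιM))
    (N : Type*) [AddCommGroup N] [Module B N]
    (htfN : ∀ n : N, hbar • n = 0 → n = 0)
    (hIN : ∀ (b : B) (n : N), π b ∈ I → ∃ n' : N, b • n = hbar • n') :
    -- surjectivity: every `B`-linear map `M → N` extends to `M^{ren}`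
    (∀ g : M →ₗ[B] N, ∃ f : M' → N,
      (∀ x ∈ Mren, ∀ y ∈ Mren, f (x + y) = f x + f y) ∧
      (∀ b : B, ∀ x ∈ Mren, f (ι b • x) = b • f x) ∧
      (∀ m : M, f (ιM m) = g m)) ∧
    -- injectivity: two `B`-linear maps on `M^{ren}` agreeing on `M` coincide
    (∀ f₁ f₂ : M' → N,
      (∀ x ∈ Mren, ∀ y ∈ Mren, f₁ (x + y) = f₁ x + f₁ y) →
      (∀ b : B, ∀ x ∈ Mren, f₁ (ι b • x) = b • f₁ x) →
      (∀ x ∈ Mren, ∀ y ∈ Mren, f₂ (x + y) = f₂ x + f₂ y) →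
      (∀ b : B, ∀ x ∈ Mren, f₂ (ι b • x) = b • f₂ x) →
      (∀ m : M, f₁ (ιM m) = f₂ (ιM m)) →
      ∀ x ∈ Mren, f₁ x = f₂ x) := by
  have hhb : ∀ b : B, Commute hbar b := fun b => hhbar ▸ Algebra.commutes _ b
  have hvι : ∀ b : B, Commute v (ι b) := fun b => ((hhb b).map ι).of_mul_eq_one_left hv₁ hv₂
  have hN : IsSMulRegular N hbar := .of_right_eq_zero_of_smul htfN
  obtain rfl : Mren = renorm π I ι hbar v ιM.range := by
    rw [hMren, coe_renorm, AddMonoidHom.coe_range]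
  refine ⟨exists_extension hv₁ hv₂ hhb hvι hιMinj hιMact hN hIN, ?_⟩
  intro f₁ f₂ hadd₁ hsmul₁ hadd₂ hsmul₂ hM x hx
  exact eqOn_renorm hv₁ hv₂ hN hadd₁ hsmul₁ hadd₂ hsmul₂ (by rintro _ ⟨m, rfl⟩; exact hM m) hx

/-- the universal property of `M ↪ M^{ren}`.  For every
`ℏ`-torsion-free `B`-module `N` with `I·(N/ℏN) = 0`, composition with the
inclusion `M ↪ M^{ren}` induces a bijection `Hom_B(M^{ren}, N) ≅ Hom_B(M, N)`:
every `B`-linear `g : M → N` extends to a `B`-linear map on `M^{ren}`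
(surjectivity), and two `B`-linear maps on `M^{ren}` agreeing on `M` agree
(injectivity).  Hence `M ↦ M^{ren}` is left adjoint to the inclusion of the
full subcategory of `ℏ`-torsion-free modules killed by `I` modulo `ℏ`. -/
theorem stmt_8 (B : Type*) [Ring B] [Algebra (Polynomial ℂ) B]
    (htf : ∀ (q : Polynomial ℂ) (b : B), q • b = 0 → q = 0 ∨ b = 0)
    (hbar : B) (hhbar : hbar = algebraMap (Polynomial ℂ) B Polynomial.X)
    (B₀ : Type*) [Ring B₀] [Algebra ℂ B₀] (π : B →+* B₀)
    (hsurj : Function.Surjective π)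
    (hker : ∀ b : B, π b = 0 ↔ ∃ a : B, b = hbar * a)
    (A I : Set B₀)
    (hAcenter : A ⊆ Subring.center B₀) (h1A : (1 : B₀) ∈ A)
    (hAadd : ∀ x ∈ A, ∀ y ∈ A, x + y ∈ A) (hAmul : ∀ x ∈ A, ∀ y ∈ A, x * y ∈ A)
    (hAsmul : ∀ (a : ℂ), ∀ x ∈ A, a • x ∈ A)
    (hIA : I ⊆ A) (h0I : (0 : B₀) ∈ I)
    (hIadd : ∀ x ∈ I, ∀ y ∈ I, x + y ∈ I) (hIneg : ∀ x ∈ I, -x ∈ I)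
    (hImul : ∀ a ∈ A, ∀ x ∈ I, a * x ∈ I)
    (C : Type*) [Ring C] (ι : B →+* C) (hιinj : Function.Injective ι)
    (v : C) (hv₁ : ι hbar * v = 1) (hv₂ : v * ι hbar = 1)
    (hvcentral : ∀ c : C, v * c = c * v)
    (hCgen : ∀ c : C, ∃ (b : B) (k : ℕ), c = v ^ k * ι b)
    (M : Type*) [AddCommGroup M] [Module B M]
    (htfM : ∀ m : M, hbar • m = 0 → m = 0)
    (M₀ : Type*) [AddCommGroup M₀] [Module B₀ M₀]
    (p : M →+ M₀) (hpsurj : Function.Surjective p)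
    (hpact : ∀ (b : B) (m : M), p (b • m) = π b • p m)
    (hpker : ∀ m : M, p m = 0 ↔ ∃ m' : M, m = hbar • m')
    (M' : Type*) [AddCommGroup M'] [Module C M']
    (ιM : M →+ M') (hιMinj : Function.Injective ιM)
    (hιMact : ∀ (b : B) (m : M), ιM (b • m) = ι b • ιM m)
    (hMgen : ∀ x : M', ∃ (m : M) (k : ℕ), x = v ^ k • ιM m)
    (Mren : Set M')
    (hMren : Mren = ⋃ k : ℕ, (sharpSet π I ι hbar v)^[k] (Set.range ιM))
    (N : Type*) [AddCommGroup N] [Module B N]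
    (htfN : ∀ n : N, hbar • n = 0 → n = 0)
    (hIN : ∀ (b : B) (n : N), π b ∈ I → ∃ n' : N, b • n = hbar • n') :
    -- surjectivity: every `B`-linear map `M → N` extends to `M^{ren}`
    (∀ g : M →ₗ[B] N, ∃ f : M' → N,
      (∀ x ∈ Mren, ∀ y ∈ Mren, f (x + y) = f x + f y) ∧
      (∀ b : B, ∀ x ∈ Mren, f (ι b • x) = b • f x) ∧
      (∀ m : M, f (ιM m) = g m)) ∧
    -- injectivity: two `B`-linear maps on `M^{ren}` agreeing on `M` coincide
    (∀ f₁ f₂ : M' → N,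
      (∀ x ∈ Mren, ∀ y ∈ Mren, f₁ (x + y) = f₁ x + f₁ y) →
      (∀ b : B, ∀ x ∈ Mren, f₁ (ι b • x) = b • f₁ x) →
      (∀ x ∈ Mren, ∀ y ∈ Mren, f₂ (x + y) = f₂ x + f₂ y) →
      (∀ b : B, ∀ x ∈ Mren, f₂ (ι b • x) = b • f₂ x) →
      (∀ m : M, f₁ (ιM m) = f₂ (ιM m)) →
      ∀ x ∈ Mren, f₁ x = f₂ x) :=
  stmt_8_general B hbar hhbar B₀ π I C ι v hv₁ hv₂ M M' ιM hιMinj hιMact Mren hMren N htfN hIN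
end
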